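/- arXiv:1210.0671 — 3 statements merged into one kernel-verified Lean document; each statement's English description precedes it below -/
import Mathlib

section
/- Let (X,p) be a complete partial metric space and T : X → X satisfy p(Tx,Ty) ≤ max{φ(p(x,y)), p(x,x), p(y,y)} for all x,y ∈ X, where φ : [0,∞) → [0,∞) is increasing, f(t) = t - φ(t) is increasing with f^{-1} right continuous at 0, and lim_{n→∞} φ^n(t) = 0 for all t ≥ 0. Then the set X_p = {x ∈ X : p(x,x) = inf{p(y,z) : y,z ∈ X}} is nonempty, there is a unique u ∈ X_p with Tu = u, and for each x ∈ X_p the sequence (T^n x) converges to u with respect to the metric p^s. -/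
open Filter Topology

structure IsPartialMetric {X : Type*} (p : X → X → ℝ) : Prop where
  nonneg : ∀ x y, 0 ≤ p x y
  symm : ∀ x y, p x y = p y x
  eq_of : ∀ x y, p x x = p x y → p y y = p x y → x = y
  self_le : ∀ x y, p x x ≤ p x y
  triangle : ∀ x y z, p x z + p y y ≤ p x y + p y z

/-- The associated metric pˢ(x,y) = 2 p(x,y) - p(x,x) - p(y,y). -/
def pS {X : Type*} (p : X → X → ℝ) (x y : X) : ℝ := 2 * p x y - p x x - p y y

/-- Completeness of a partial metric space: every Cauchy sequence (one for which
lim_{n,m} p(x_n,x_m) exists) converges wrt pˢ to a point z with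
p(z,z) = lim_{n,m} p(x_n,x_m). -/
def IsCompletePMS {X : Type*} (p : X → X → ℝ) : Prop :=
  ∀ x : ℕ → X, (∃ a : ℝ, Tendsto (fun nm : ℕ × ℕ => p (x nm.1) (x nm.2)) atTop (𝓝 a)) →
    ∃ z : X, Tendsto (fun n => pS p z (x n)) atTop (𝓝 0) ∧
      Tendsto (fun nm : ℕ × ℕ => p (x nm.1) (x nm.2)) atTop (𝓝 (p z z))


section AuxPhiContraction

section
variable {X : Type*} {p : X → X → ℝ} {T : X → X} {φ : ℝ → ℝ}

lemma phi_zero (hφ_nonneg : ∀ t : ℝ, 0 ≤ t → 0 ≤ φ t)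
    (hφ_mono : ∀ s t : ℝ, 0 ≤ s → s ≤ t → φ s ≤ φ t)
    (hiter : ∀ t : ℝ, 0 ≤ t → Tendsto (fun n => φ^[n] t) atTop (𝓝 0)) : φ 0 = 0 := by
  have hnn : ∀ n, 0 ≤ φ^[n] (0:ℝ) := by
    intro n; induction n with
    | zero => simp
    | succ n ih => rw [Function.iterate_succ_apply']; exact hφ_nonneg _ ih
  have hmono : Monotone (fun n => φ^[n] (0:ℝ)) := by
    apply monotone_nat_of_le_succ
    intro n
    induction n with
    | zero => simpa using hφ_nonneg 0 le_rfl
    | succ n ih =>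
      have : φ (φ^[n] 0) ≤ φ (φ^[n+1] 0) := hφ_mono _ _ (hnn n) ih
      simpa [Function.iterate_succ_apply'] using this
  have h1 : φ^[1] (0:ℝ) ≤ 0 := hmono.ge_of_tendsto (hiter 0 le_rfl) 1
  simpa using le_antisymm h1 (hφ_nonneg 0 le_rfl)

lemma phi_le (hφ0 : φ 0 = 0)
    (hf_mono : ∀ s t : ℝ, 0 ≤ s → s ≤ t → s - φ s ≤ t - φ t) :
    ∀ t : ℝ, 0 ≤ t → φ t ≤ t := by
  intro t ht
  have := hf_mono 0 t le_rfl ht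
  rw [hφ0] at this; linarith

lemma phi_lt (hφ_le : ∀ t : ℝ, 0 ≤ t → φ t ≤ t)
    (hiter : ∀ t : ℝ, 0 ≤ t → Tendsto (fun n => φ^[n] t) atTop (𝓝 0)) :
    ∀ t : ℝ, 0 < t → φ t < t := by
  intro t ht
  rcases lt_or_eq_of_le (hφ_le t ht.le) with h | h
  · exact h
  · exfalso
    have hfix : ∀ n, φ^[n] t = t := fun n => Function.iterate_fixed h n
    have : Tendsto (fun _ : ℕ => t) atTop (𝓝 0) := by
      simpa [hfix] using hiter t ht.le
    exact absurd (tendsto_nhds_unique this tendsto_const_nhds) (by linarith)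

lemma phi_iter_nonneg (hφ_nonneg : ∀ t : ℝ, 0 ≤ t → 0 ≤ φ t) :
    ∀ (n : ℕ) (t : ℝ), 0 ≤ t → 0 ≤ φ^[n] t := by
  intro n
  induction n with
  | zero => simp
  | succ n ih => intro t ht; rw [Function.iterate_succ_apply']; exact hφ_nonneg _ (ih t ht)

lemma selfT (hp : IsPartialMetric p) (hφ_le : ∀ t : ℝ, 0 ≤ t → φ t ≤ t)
    (hT : ∀ x y, p (T x) (T y) ≤ max (φ (p x y)) (max (p x x) (p y y))) :
    ∀ x, p (T x) (T x) ≤ p x x := by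
  intro x
  have := hT x x
  have h2 := hφ_le (p x x) (hp.nonneg x x)
  simp only [max_self] at this
  exact this.trans (max_le h2 le_rfl)

lemma selfT_iter (hp : IsPartialMetric p) (hφ_le : ∀ t : ℝ, 0 ≤ t → φ t ≤ t)
    (hT : ∀ x y, p (T x) (T y) ≤ max (φ (p x y)) (max (p x x) (p y y))) :
    ∀ (n : ℕ) (x : X), p (T^[n] x) (T^[n] x) ≤ p x x := by
  intro n x
  induction n with
  | zero => simp
  | succ n ih =>
    rw [Function.iterate_succ_apply']
    exact (selfT hp hφ_le hT _).trans ih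

lemma iterT_bound (hp : IsPartialMetric p)
    (hφ_nonneg : ∀ t : ℝ, 0 ≤ t → 0 ≤ φ t)
    (hφ_mono : ∀ s t : ℝ, 0 ≤ s → s ≤ t → φ s ≤ φ t)
    (hφ_le : ∀ t : ℝ, 0 ≤ t → φ t ≤ t)
    (hT : ∀ x y, p (T x) (T y) ≤ max (φ (p x y)) (max (p x x) (p y y))) :
    ∀ (n : ℕ) (a b : X),
      p (T^[n] a) (T^[n] b) ≤ max (φ^[n] (p a b)) (max (p a a) (p b b)) := by
  intro n a b
  induction n with
  | zero => simp [le_max_left]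
  | succ n ih =>
    rw [Function.iterate_succ_apply', Function.iterate_succ_apply',
      Function.iterate_succ_apply']
    refine (hT _ _).trans (max_le ?_ (max_le ?_ ?_))
    · -- φ (p (T^[n] a) (T^[n] b)) ≤ max (φ^[n+1] (p a b)) (max (p a a) (p b b))
      have h1 : φ (p (T^[n] a) (T^[n] b)) ≤ φ (max (φ^[n] (p a b)) (max (p a a) (p b b))) :=
        hφ_mono _ _ (hp.nonneg _ _) ih
      refine h1.trans ?_
      rcases max_cases (φ^[n] (p a b)) (max (p a a) (p b b)) with ⟨h, _⟩ | ⟨h, _⟩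
      · rw [h]; exact le_max_left _ _
      · rw [h]
        refine le_trans (hφ_le _ ?_) (le_max_right _ _)
        exact le_trans (hp.nonneg a a) (le_max_left _ _)
    · exact le_trans (selfT_iter hp hφ_le hT n a) (le_trans (le_max_left _ _) (le_max_right _ _))
    · exact le_trans (selfT_iter hp hφ_le hT n b) (le_trans (le_max_right _ _) (le_max_right _ _))
end


section
variable {X : Type*} {p : X → X → ℝ} {T : X → X} {φ : ℝ → ℝ}

lemma orbit_cauchy (hp : IsPartialMetric p)
    (hφ_nonneg : ∀ t : ℝ, 0 ≤ t → 0 ≤ φ t)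
    (hφ_mono : ∀ s t : ℝ, 0 ≤ s → s ≤ t → φ s ≤ φ t)
    (hf_mono : ∀ s t : ℝ, 0 ≤ s → s ≤ t → s - φ s ≤ t - φ t)
    (hiter : ∀ t : ℝ, 0 ≤ t → Tendsto (fun n => φ^[n] t) atTop (𝓝 0))
    (hT : ∀ x y, p (T x) (T y) ≤ max (φ (p x y)) (max (p x x) (p y y)))
    (x0 : X) :
    Tendsto (fun nm : ℕ × ℕ => p (T^[nm.1] x0) (T^[nm.2] x0)) atTop
      (𝓝 (⨅ n, p (T^[n] x0) (T^[n] x0))) := by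
  have hφ0 : φ 0 = 0 := phi_zero hφ_nonneg hφ_mono hiter
  have hφ_le : ∀ t : ℝ, 0 ≤ t → φ t ≤ t := phi_le hφ0 hf_mono
  have hφ_lt : ∀ t : ℝ, 0 < t → φ t < t := phi_lt hφ_le hiter
  set x : ℕ → X := fun n => T^[n] x0 with hx
  set a : ℕ → ℝ := fun n => p (x n) (x n) with ha
  set d : ℕ → ℝ := fun n => p (x n) (x (n + 1)) with hd
  have hax : ∀ n, p (x n) (x n) = a n := fun _ => rfl
  have hdx : ∀ n, p (x n) (x (n + 1)) = d n := fun _ => rfl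
  have hxsucc : ∀ n, x (n + 1) = T (x n) := by
    intro n; simp only [hx, Function.iterate_succ_apply']
  have hxiter : ∀ n k, x (n + k) = T^[k] (x n) := by
    intro n k
    simp only [hx, add_comm n k, Function.iterate_add_apply]
  have hcons : ∀ n m, p (x (n + 1)) (x (m + 1)) ≤ max (φ (p (x n) (x m))) (max (a n) (a m)) := by
    intro n m
    have h := hT (x n) (x m)
    rw [← hxsucc, ← hxsucc] at h
    simpa only [hax] using h
  have ha_anti : Antitone a := by
    apply antitone_nat_of_succ_le
    intro n
    have h := selfT hp hφ_le hT (x n)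
    rw [← hxsucc] at h
    simpa only [hax] using h
  have ha_nonneg : ∀ n, 0 ≤ a n := fun n => hp.nonneg _ _
  have ha_bdd : BddBelow (Set.range a) := ⟨0, by rintro r ⟨n, rfl⟩; exact ha_nonneg n⟩
  set A := ⨅ n, a n with hA
  have hA_le : ∀ n, A ≤ a n := fun n => ciInf_le ha_bdd n
  have hA_nonneg : 0 ≤ A := le_ciInf ha_nonneg
  have ha_lim : Tendsto a atTop (𝓝 A) := tendsto_atTop_ciInf ha_anti ha_bdd
  have ha_le_d : ∀ n, a n ≤ d n := fun n => hp.self_le _ _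
  have ha_le_d' : ∀ n, a (n + 1) ≤ d n := by
    intro n
    calc a (n + 1) ≤ p (x (n + 1)) (x n) := hp.self_le _ _
    _ = d n := by rw [hp.symm, hdx]
  have hd_nonneg : ∀ n, 0 ≤ d n := fun n => hp.nonneg _ _
  have hd_anti : Antitone d := by
    apply antitone_nat_of_succ_le
    intro n
    refine (hcons n (n + 1)).trans (max_le ?_ (max_le (ha_le_d n) (ha_le_d' n)))
    exact (hφ_le _ (hp.nonneg _ _)).trans (le_of_eq (hdx n))
  have hdk : ∀ n k, d (n + k) ≤ max (φ^[k] (d n)) (a n) := by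
    intro n k
    have e1 : x (n + k) = T^[k] (x n) := hxiter n k
    have e2 : x (n + k + 1) = T^[k] (x (n + 1)) := by
      rw [show n + k + 1 = (n + 1) + k from by ring]; exact hxiter (n + 1) k
    have h := iterT_bound hp hφ_nonneg hφ_mono hφ_le hT k (x n) (x (n + 1))
    rw [← e1, ← e2] at h
    simp only [hax, hdx] at h
    refine h.trans ?_
    rw [max_eq_left (ha_anti (Nat.le_succ n))]
  -- d is eventually ≤ A + ε
  have hd_small : ∀ ε : ℝ, 0 < ε → ∃ N, ∀ m ≥ N, d m ≤ A + ε := by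
    intro ε hε
    obtain ⟨n, hn⟩ : ∃ n, a n ≤ A + ε / 2 := by
      have := (ha_lim.eventually (eventually_le_nhds (by linarith : A < A + ε / 2))).exists
      exact this
    obtain ⟨k, hk⟩ : ∃ k, φ^[k] (d n) ≤ ε / 2 := by
      have := ((hiter (d n) (hd_nonneg n)).eventually
        (eventually_le_nhds (by linarith : (0:ℝ) < ε / 2))).exists
      exact this
    refine ⟨n + k, fun m hm => ?_⟩
    calc d m ≤ d (n + k) := hd_anti hm
    _ ≤ max (φ^[k] (d n)) (a n) := hdk n k
    _ ≤ A + ε := max_le (by linarith) (by linarith)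
  -- main quantitative bound
  have hmain : ∀ ε : ℝ, 0 < ε → ∃ N, ∀ n ≥ N, ∀ k, p (x n) (x (n + k)) ≤ A + ε := by
    intro ε hε
    have hAε : 0 < A + ε := by linarith
    set c := (A + ε) - φ (A + ε) with hc
    have hc0 : 0 < c := sub_pos.2 (hφ_lt _ hAε)
    set δ := min ε c / 4 with hδ
    have hδ0 : 0 < δ := by positivity
    have hδε : δ ≤ ε / 4 := by
      rw [hδ]; exact div_le_div_of_nonneg_right (min_le_left _ _) (by norm_num) |>.trans le_rfl
    have hδc : δ ≤ c / 4 := by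
      rw [hδ]; exact div_le_div_of_nonneg_right (min_le_right _ _) (by norm_num) |>.trans le_rfl
    obtain ⟨N, hN⟩ := hd_small δ hδ0
    refine ⟨N, fun n hn k => ?_⟩
    induction k with
    | zero =>
      have : a n ≤ A + δ := (ha_le_d n).trans (hN n hn)
      calc p (x n) (x (n + 0)) = a n := hax n
      _ ≤ A + ε := by linarith
    | succ k ih =>
      by_contra hcon
      push_neg at hcon
      set r := p (x n) (x (n + k + 1)) with hr
      have hcon' : A + ε < r := hcon
      -- first bound : r ≤ A + ε + δ  (not strictly needed, skip)
      -- second chain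
      have t1 : p (x n) (x (n + k + 1)) + a (n + 1) ≤ d n + p (x (n + 1)) (x (n + k + 1)) := by
        have := hp.triangle (x n) (x (n + 1)) (x (n + k + 1))
        simpa only [hax, hdx] using this
      have t2 : p (x (n + 1)) (x (n + k + 1)) + a (n + k + 2) ≤
          p (x (n + 1)) (x (n + k + 2)) + d (n + k + 1) := by
        have h := hp.triangle (x (n + 1)) (x (n + k + 2)) (x (n + k + 1))
        have hsymm : p (x (n + k + 2)) (x (n + k + 1)) = d (n + k + 1) :=
          (hp.symm _ _).trans (hdx (n + k + 1))
        rw [hsymm] at h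
        simpa only [hax] using h
      have t3 : p (x (n + 1)) (x (n + k + 2)) ≤ max (φ r) (max (a n) (a (n + k + 1))) := by
        exact hcons n (n + k + 1)
      have hdn : d n ≤ A + δ := hN n hn
      have hdnk : d (n + k + 1) ≤ A + δ := hN _ (le_trans hn (by omega))
      have han : a n ≤ A + δ := (ha_le_d n).trans hdn
      have hank : a (n + k + 1) ≤ A + δ := (ha_le_d _).trans hdnk
      have hmax : max (φ r) (max (a n) (a (n + k + 1))) ≤ max (φ r) (A + δ) :=
        max_le_max le_rfl (max_le han hank)
      have h2 : r ≤ 2 * δ + max (φ r) (A + δ) := by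
        have l1 := hA_le (n + 1)
        have l2 := hA_le (n + k + 2)
        have := le_trans t3 hmax
        rw [hr]; linarith
      rcases le_or_gt (φ r) (A + δ) with h | h
      · rw [max_eq_right h] at h2
        linarith
      · rw [max_eq_left h.le] at h2
        have hfr : c ≤ r - φ r := hf_mono (A + ε) r hAε.le hcon'.le
        linarith
  -- conclude tendsto
  have hlow : ∀ n m : ℕ, A ≤ p (x n) (x m) := by
    intro n m
    exact (hA_le n).trans ((hax n) ▸ hp.self_le (x n) (x m))
  rw [Metric.tendsto_atTop]
  intro ε hε
  obtain ⟨N, hN⟩ := hmain (ε / 2) (by linarith)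
  refine ⟨(N, N), fun nm hnm => ?_⟩
  obtain ⟨h1, h2⟩ := hnm
  have key : ∀ i j : ℕ, N ≤ i → i ≤ j → p (x i) (x j) ≤ A + ε / 2 := by
    intro i j hi hij
    obtain ⟨k, rfl⟩ := Nat.exists_eq_add_of_le hij
    exact hN i hi k
  have hub : p (x nm.1) (x nm.2) ≤ A + ε / 2 := by
    rcases le_total nm.1 nm.2 with h | h
    · exact key _ _ h1 h
    · rw [hp.symm]; exact key _ _ h2 h
  rw [Real.dist_eq, abs_lt]
  constructor
  · have := hlow nm.1 nm.2; linarith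
  · linarith
end

end AuxPhiContraction


theorem phi_contraction_fixed_point {X : Type*} [Nonempty X] {p : X → X → ℝ}
    (hp : IsPartialMetric p) (hcomp : IsCompletePMS p) (T : X → X) (φ g : ℝ → ℝ)
    (hφ_nonneg : ∀ t : ℝ, 0 ≤ t → 0 ≤ φ t)
    (hφ_mono : ∀ s t : ℝ, 0 ≤ s → s ≤ t → φ s ≤ φ t)
    (hf_mono : ∀ s t : ℝ, 0 ≤ s → s ≤ t → s - φ s ≤ t - φ t)
    (hg_left : ∀ s : ℝ, 0 ≤ s → g s - φ (g s) ≤ s)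
    (hg_ge : ∀ s : ℝ, 0 ≤ s → s ≤ g s)
    (hg0 : g 0 = 0)
    (hg_rc : Tendsto g (nhdsWithin 0 (Set.Ici 0)) (𝓝 0))
    (hiter : ∀ t : ℝ, 0 ≤ t → Tendsto (fun n => φ^[n] t) atTop (𝓝 0))
    (hT : ∀ x y, p (T x) (T y) ≤ max (φ (p x y)) (max (p x x) (p y y))) :
    let ρ := sInf {r : ℝ | ∃ x y : X, p x y = r}
    let Xp := {x : X | p x x = ρ}
    Xp.Nonempty ∧
    ∃ u : X, u ∈ Xp ∧ T u = u ∧ (∀ v ∈ Xp, T v = v → v = u) ∧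
      ∀ x ∈ Xp, Tendsto (fun n => pS p (T^[n] x) u) atTop (𝓝 0) := by
  intro ρ Xp
  have hφ0 : φ 0 = 0 := phi_zero hφ_nonneg hφ_mono hiter
  have hφ_le : ∀ t : ℝ, 0 ≤ t → φ t ≤ t := phi_le hφ0 hf_mono
  have hφ_lt : ∀ t : ℝ, 0 < t → φ t < t := phi_lt hφ_le hiter
  have hSne : Set.Nonempty {r : ℝ | ∃ x y : X, p x y = r} := by
    obtain ⟨w⟩ := ‹Nonempty X›
    exact ⟨p w w, w, w, rfl⟩
  have hSbdd : BddBelow {r : ℝ | ∃ x y : X, p x y = r} := by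
    refine ⟨0, ?_⟩
    rintro r ⟨x, y, rfl⟩
    exact hp.nonneg x y
  have hρ_le : ∀ x y : X, ρ ≤ p x y := fun x y => csInf_le hSbdd ⟨x, y, rfl⟩
  have hρ_nonneg : 0 ≤ ρ := le_csInf hSne (by rintro r ⟨x, y, rfl⟩; exact hp.nonneg x y)
  have hbdd : ∀ x0 : X, BddBelow (Set.range fun n => p (T^[n] x0) (T^[n] x0)) := by
    intro x0
    refine ⟨0, ?_⟩
    rintro r ⟨n, rfl⟩
    exact hp.nonneg _ _
  have hinf_le : ∀ x0 : X, (⨅ n, p (T^[n] x0) (T^[n] x0)) ≤ p x0 x0 := by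
    intro x0
    simpa using ciInf_le (hbdd x0) 0
  have hρ_inf : ∀ x0 : X, ρ ≤ ⨅ n, p (T^[n] x0) (T^[n] x0) :=
    fun x0 => le_ciInf fun n => hρ_le _ _
  have diag : Tendsto (fun n : ℕ => ((n : ℕ), (n : ℕ))) atTop atTop := by
    rw [← prod_atTop_atTop_eq]
    exact tendsto_id.prodMk tendsto_id
  -- the orbit of any point converges
  have horbit : ∀ x0 : X, ∃ z : X,
      p z z = (⨅ n, p (T^[n] x0) (T^[n] x0)) ∧
      Tendsto (fun n => p z (T^[n] x0)) atTop (𝓝 (p z z)) := by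
    intro x0
    have hc := orbit_cauchy hp hφ_nonneg hφ_mono hf_mono hiter hT x0
    obtain ⟨z, hz1, hz2⟩ := hcomp (fun n => T^[n] x0) ⟨_, hc⟩
    have hzz : p z z = ⨅ n, p (T^[n] x0) (T^[n] x0) := tendsto_nhds_unique hz2 hc
    refine ⟨z, hzz, ?_⟩
    have hself : Tendsto (fun n => p (T^[n] x0) (T^[n] x0)) atTop (𝓝 (p z z)) :=
      hz2.comp diag
    have heq : ∀ n : ℕ, p z (T^[n] x0) =
        (pS p z (T^[n] x0) + p z z + p (T^[n] x0) (T^[n] x0)) / 2 := by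
      intro n; simp only [pS]; ring
    have ht : Tendsto (fun n => (pS p z (T^[n] x0) + p z z + p (T^[n] x0) (T^[n] x0)) / 2)
        atTop (𝓝 ((0 + p z z + p z z) / 2)) :=
      ((hz1.add tendsto_const_nhds).add hself).div_const 2
    have : ((0 + p z z + p z z) / 2) = p z z := by ring
    rw [this] at ht
    exact ht.congr (fun n => (heq n).symm)
  -- Step A : Xp is nonempty
  have hyex : ∀ k : ℕ, ∃ w : X, p w w < ρ + 1 / (k + 1) := by
    intro k
    have hpos : (0:ℝ) < 1 / ((k:ℝ) + 1) := by positivity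
    obtain ⟨r, ⟨xx, yy, rfl⟩, hr⟩ := exists_lt_of_csInf_lt hSne
      (show sInf {r : ℝ | ∃ x y : X, p x y = r} < ρ + 1 / (k + 1) by
        change ρ < _; linarith)
    exact ⟨xx, lt_of_le_of_lt (hp.self_le xx yy) hr⟩
  choose y hy using hyex
  have hzex : ∀ k : ℕ, ∃ z : X, p z z ≤ p (y k) (y k) ∧ ρ ≤ p z z ∧
      Tendsto (fun n => p z (T^[n] (y k))) atTop (𝓝 (p z z)) := by
    intro k
    obtain ⟨z, h1, h2⟩ := horbit (y k)
    exact ⟨z, h1 ▸ hinf_le (y k), h1 ▸ hρ_inf (y k), h2⟩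
  choose z hz1 hz2 hz3 using hzex
  have hzjk : ∀ j k : ℕ, p (z j) (z k) ≤ ρ + 2 / (j + 1) + 2 / (k + 1) := by
    intro j k
    refine le_of_forall_pos_lt_add ?_
    intro ε hε
    set ej : ℝ := 1 / ((j:ℝ) + 1) with hej
    set ek : ℝ := 1 / ((k:ℝ) + 1) with hek
    have hej0 : 0 < ej := by positivity
    have hek0 : 0 < ek := by positivity
    have E1 : ∀ᶠ n : ℕ in atTop, p (z j) (T^[n] (y j)) ≤ p (z j) (z j) + ε / 4 :=
      (hz3 j).eventually (eventually_le_nhds (by linarith))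
    have E2 : ∀ᶠ n : ℕ in atTop, p (z k) (T^[n] (y k)) ≤ p (z k) (z k) + ε / 4 :=
      (hz3 k).eventually (eventually_le_nhds (by linarith))
    have E3 : ∀ᶠ n : ℕ in atTop, φ^[n] (p (y j) (y k)) ≤ ε / 4 :=
      (hiter _ (hp.nonneg _ _)).eventually (eventually_le_nhds (by linarith))
    obtain ⟨n, h1, h2, h3⟩ := (E1.and (E2.and E3)).exists
    set w : X := T^[n] (y j)
    set w' : X := T^[n] (y k)
    have tri1 : p (z j) (z k) ≤ p (z j) w + p w (z k) - p w w := by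
      have := hp.triangle (z j) w (z k); linarith
    have tri2 : p w (z k) ≤ p w w' + p w' (z k) - p w' w' := by
      have := hp.triangle w w' (z k); linarith
    have hb1 : p (z j) w ≤ ρ + ej + ε / 4 := by
      have := hz1 j
      have := hy j
      have := h1
      simp only [hej]
      linarith
    have hb3 : p w' (z k) ≤ ρ + ek + ε / 4 := by
      have hs : p w' (z k) = p (z k) w' := hp.symm _ _
      have := hz1 k
      have := hy k
      rw [hs]
      simp only [hek]
      linarith
    have hb2 : p w w' ≤ ρ + ej + ek + ε / 4 := by
      have hib := iterT_bound hp hφ_nonneg hφ_mono hφ_le hT n (y j) (y k)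
      refine hib.trans (max_le ?_ (max_le ?_ ?_))
      · linarith [hρ_nonneg, hej0.le, hek0.le, h3]
      · have := hy j; simp only [hej]; linarith [hek0.le, hε.le]
      · have := hy k; simp only [hek]; linarith [hej0.le, hε.le]
    have hw : ρ ≤ p w w := hρ_le _ _
    have hw' : ρ ≤ p w' w' := hρ_le _ _
    have : p (z j) (z k) ≤ ρ + 2 * ej + 2 * ek + 3 * (ε / 4) := by linarith
    have h2j : 2 / ((j:ℝ) + 1) = 2 * ej := by rw [hej]; ring
    have h2k : 2 / ((k:ℝ) + 1) = 2 * ek := by rw [hek]; ring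
    rw [h2j, h2k]
    linarith
  have hz_cauchy : Tendsto (fun jk : ℕ × ℕ => p (z jk.1) (z jk.2)) atTop (𝓝 ρ) := by
    rw [Metric.tendsto_atTop]
    intro ε hε
    obtain ⟨J, hJ⟩ := exists_nat_one_div_lt (show (0:ℝ) < ε / 4 by linarith)
    refine ⟨(J, J), fun jk hjk => ?_⟩
    obtain ⟨hj, hk⟩ := hjk
    have hle : ∀ i : ℕ, J ≤ i → 2 / ((i:ℝ) + 1) ≤ 2 / ((J:ℝ) + 1) := by
      intro i hi
      have hi' : (J:ℝ) ≤ (i:ℝ) := Nat.cast_le.2 hi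
      gcongr
    have hJ' : 2 / ((J:ℝ) + 1) < ε / 2 := by
      have h1 : (1:ℝ) / (J + 1) < ε / 4 := hJ
      have h2 : 2 / ((J:ℝ) + 1) = 2 * (1 / ((J:ℝ) + 1)) := by ring
      linarith
    have hub : p (z jk.1) (z jk.2) ≤ ρ + 2 / ((jk.1:ℝ) + 1) + 2 / ((jk.2:ℝ) + 1) :=
      hzjk jk.1 jk.2
    have hlb : ρ ≤ p (z jk.1) (z jk.2) := hρ_le _ _
    rw [Real.dist_eq, abs_lt]
    have i1 := hle jk.1 hj
    have i2 := hle jk.2 hk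
    constructor <;> linarith
  obtain ⟨u0, _, hu2⟩ := hcomp z ⟨ρ, hz_cauchy⟩
  have hu0 : p u0 u0 = ρ := tendsto_nhds_unique hu2 hz_cauchy
  -- Step B : fixed point starting from u0
  have hself_const : ∀ (w : X), p w w = ρ → ∀ n, p (T^[n] w) (T^[n] w) = ρ := by
    intro w hw n
    refine le_antisymm ?_ (hρ_le _ _)
    calc p (T^[n] w) (T^[n] w) ≤ p w w := selfT_iter hp hφ_le hT n w
    _ = ρ := hw
  have hinf_u0 : (⨅ n, p (T^[n] u0) (T^[n] u0)) = ρ := by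
    have : (fun n => p (T^[n] u0) (T^[n] u0)) = fun _ : ℕ => ρ :=
      funext (hself_const u0 hu0)
    rw [this, ciInf_const]
  obtain ⟨u, hu_self, hu_tend⟩ := horbit u0
  rw [hinf_u0] at hu_self
  rw [hu_self] at hu_tend
  -- u is a fixed point
  have hfixu : T u = u := by
    have hle : p u (T u) ≤ ρ := by
      refine le_of_forall_pos_lt_add ?_
      intro ε hε
      obtain ⟨N, hN⟩ := (Metric.tendsto_atTop.1 hu_tend) (ε / 4) (by linarith)
      have hN1 : p u (T^[N] u0) < ρ + ε / 4 := by
        have := hN N le_rfl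
        rw [Real.dist_eq, abs_lt] at this
        linarith [this.2]
      have hN2 : p u (T^[N + 1] u0) < ρ + ε / 4 := by
        have := hN (N + 1) (Nat.le_succ N)
        rw [Real.dist_eq, abs_lt] at this
        linarith [this.2]
      have tri : p u (T u) ≤ p u (T^[N + 1] u0) + p (T^[N + 1] u0) (T u)
          - p (T^[N + 1] u0) (T^[N + 1] u0) := by
        have := hp.triangle u (T^[N + 1] u0) (T u)
        linarith
      have hsel : p (T^[N + 1] u0) (T^[N + 1] u0) = ρ := hself_const u0 hu0 (N + 1)
      have hcontr : p (T^[N + 1] u0) (T u) ≤ ρ + ε / 4 := by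
        rw [Function.iterate_succ_apply']
        refine (hT _ _).trans (max_le ?_ (max_le ?_ ?_))
        · have h1 : φ (p (T^[N] u0) u) ≤ p (T^[N] u0) u := hφ_le _ (hp.nonneg _ _)
          have h2 : p (T^[N] u0) u = p u (T^[N] u0) := hp.symm _ _
          linarith
        · rw [hself_const u0 hu0 N]; linarith
        · rw [hu_self]; linarith
      linarith
    have hge : ρ ≤ p u (T u) := hρ_le _ _
    have hTu_self : p (T u) (T u) = ρ := by
      refine le_antisymm ?_ (hρ_le _ _)
      calc p (T u) (T u) ≤ p u u := selfT hp hφ_le hT u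
      _ = ρ := hu_self
    have := hp.eq_of u (T u) (by rw [hu_self]; linarith) (by rw [hTu_self]; linarith)
    exact this.symm
  -- uniqueness
  have huniq : ∀ v : X, p v v = ρ → T v = v → v = u := by
    intro v hv hTv
    have h := hT v u
    rw [hTv, hfixu, hv, hu_self] at h
    have hvu : p v u = ρ := by
      refine le_antisymm ?_ (hρ_le _ _)
      by_contra hcon
      push_neg at hcon
      have hlt : ρ < p v u := hcon
      have h1 : φ (p v u) < p v u := hφ_lt _ (lt_of_le_of_lt hρ_nonneg hlt)
      have : p v u < p v u := lt_of_le_of_lt h (max_lt h1 (max_lt hlt hlt))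
      exact absurd this (lt_irrefl _)
    exact hp.eq_of v u (by rw [hv, hvu]) (by rw [hu_self, hvu])
  -- convergence
  have hconv : ∀ x : X, p x x = ρ →
      Tendsto (fun n => pS p (T^[n] x) u) atTop (𝓝 0) := by
    intro x hx
    have hcb : ∀ n, p (T^[n] x) u ≤ max (φ^[n] (p x u)) ρ := by
      intro n
      induction n with
      | zero => simp [le_max_left]
      | succ n ih =>
        rw [Function.iterate_succ_apply' T n x]
        calc p (T (T^[n] x)) u = p (T (T^[n] x)) (T u) := by rw [hfixu]
        _ ≤ max (φ (p (T^[n] x) u)) (max (p (T^[n] x) (T^[n] x)) (p u u)) := hT _ _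
        _ ≤ max (φ^[n + 1] (p x u)) ρ := by
            refine max_le ?_ (max_le ?_ ?_)
            · have h1 : φ (p (T^[n] x) u) ≤ φ (max (φ^[n] (p x u)) ρ) :=
                hφ_mono _ _ (hp.nonneg _ _) ih
              refine h1.trans ?_
              rcases max_cases (φ^[n] (p x u)) ρ with ⟨h, _⟩ | ⟨h, _⟩ <;> rw [h]
              · rw [Function.iterate_succ_apply']
                exact le_max_left _ _
              · exact le_trans (hφ_le ρ hρ_nonneg) (le_max_right _ _)
            · rw [hself_const x hx n]; exact le_max_right _ _
            · rw [hu_self]; exact le_max_right _ _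
    have hup : Tendsto (fun n => max (φ^[n] (p x u)) ρ) atTop (𝓝 (max 0 ρ)) :=
      (hiter _ (hp.nonneg _ _)).max tendsto_const_nhds
    rw [max_eq_right hρ_nonneg] at hup
    have hten : Tendsto (fun n => p (T^[n] x) u) atTop (𝓝 ρ) :=
      tendsto_of_tendsto_of_tendsto_of_le_of_le tendsto_const_nhds hup
        (fun n => hρ_le _ _) hcb
    have hF : Tendsto (fun n => 2 * p (T^[n] x) u - ρ - ρ) atTop (𝓝 (2 * ρ - ρ - ρ)) :=
      ((hten.const_mul 2).sub tendsto_const_nhds).sub tendsto_const_nhds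
    have h0 : (2 * ρ - ρ - ρ) = 0 := by ring
    rw [h0] at hF
    refine hF.congr (fun n => ?_)
    simp only [pS, hself_const x hx n, hu_self]
  refine ⟨⟨u0, hu0⟩, u, hu_self, hfixu, fun v hv hTv => huniq v hv hTv, fun x hx => hconv x hx⟩
end

section
/- Let (X,p) be a complete partial metric space and T : X → X satisfy p(Tx,Ty) ≤ max{φ(p(x,y)), (p(x,x)+p(y,y))/2} for all x,y ∈ X, where φ : [0,∞) → [0,∞) is increasing, f(t) = t - φ(t) is increasing with f^{-1} right continuous at 0, and lim_{n→∞} φ^n(t) = 0 for all t ≥ 0. Then T has a unique fixed point z in X; moreover z ∈ X_p and for each x ∈ X_p the sequence (T^n x) converges to z in the metric p^s. -/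
open Filter Topology

theorem phi_contraction_unique_fixed_point {X : Type*} [Nonempty X] {p : X → X → ℝ}
    (hp : IsPartialMetric p) (hcomp : IsCompletePMS p) (T : X → X) (φ g : ℝ → ℝ)
    (hφ_nonneg : ∀ t : ℝ, 0 ≤ t → 0 ≤ φ t)
    (hφ_mono : ∀ s t : ℝ, 0 ≤ s → s ≤ t → φ s ≤ φ t)
    (hf_mono : ∀ s t : ℝ, 0 ≤ s → s ≤ t → s - φ s ≤ t - φ t)
    (hg_left : ∀ s : ℝ, 0 ≤ s → g s - φ (g s) ≤ s)
    (hg_ge : ∀ s : ℝ, 0 ≤ s → s ≤ g s)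
    (hg0 : g 0 = 0)
    (hg_rc : Tendsto g (nhdsWithin 0 (Set.Ici 0)) (𝓝 0))
    (hiter : ∀ t : ℝ, 0 ≤ t → Tendsto (fun n => φ^[n] t) atTop (𝓝 0))
    (hT : ∀ x y, p (T x) (T y) ≤ max (φ (p x y)) ((p x x + p y y) / 2)) :
    let ρ := sInf {r : ℝ | ∃ x y : X, p x y = r}
    let Xp := {x : X | p x x = ρ}
    ∃ z : X, T z = z ∧ (∀ w : X, T w = w → w = z) ∧ z ∈ Xp ∧
      ∀ x ∈ Xp, Tendsto (fun n => pS p (T^[n] x) z) atTop (𝓝 0) := by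
  intro ρ Xp
  obtain ⟨x₀⟩ := (inferInstance : Nonempty X)
  have hSne : {r : ℝ | ∃ x y : X, p x y = r}.Nonempty := ⟨p x₀ x₀, x₀, x₀, rfl⟩
  have hSbdd : BddBelow {r : ℝ | ∃ x y : X, p x y = r} :=
    ⟨0, by rintro r ⟨a, b, rfl⟩; exact hp.nonneg a b⟩
  have hρ_le : ∀ x y : X, ρ ≤ p x y := fun x y => csInf_le hSbdd ⟨x, y, rfl⟩
  have hρ_nonneg : 0 ≤ ρ := le_csInf hSne (by rintro r ⟨a, b, rfl⟩; exact hp.nonneg a b)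
  -- basic facts about φ
  have hφ0 : φ 0 = 0 := by
    by_contra h
    have hc : 0 < φ 0 := lt_of_le_of_ne (hφ_nonneg 0 le_rfl) (Ne.symm h)
    have hmono : ∀ n : ℕ, φ 0 ≤ φ^[n + 1] 0 := by
      intro n
      induction n with
      | zero => simp
      | succ k ih =>
        rw [Function.iterate_succ_apply']
        calc φ 0 ≤ φ (φ 0) := hφ_mono 0 (φ 0) le_rfl (hφ_nonneg 0 le_rfl)
          _ ≤ φ (φ^[k + 1] 0) := hφ_mono (φ 0) _ (hφ_nonneg 0 le_rfl) ih
    have : φ 0 ≤ 0 := by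
      refine ge_of_tendsto (hiter 0 le_rfl) (eventually_atTop.2 ⟨1, fun n hn => ?_⟩)
      obtain ⟨k, rfl⟩ := Nat.exists_eq_add_of_le hn
      simpa [Nat.add_comm] using hmono k
    linarith
  have hφ_le : ∀ t : ℝ, 0 ≤ t → φ t ≤ t := by
    intro t ht
    have := hf_mono 0 t le_rfl ht
    rw [hφ0] at this
    linarith
  have hφ_lt : ∀ t : ℝ, 0 < t → φ t < t := by
    intro t ht
    rcases lt_or_eq_of_le (hφ_le t ht.le) with h | h
    · exact h
    · exfalso
      have hiterfix : ∀ n : ℕ, φ^[n] t = t := by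
        intro n
        induction n with
        | zero => rfl
        | succ k ih => rw [Function.iterate_succ_apply', ih, h]
      have ht0 : t = 0 := by
        have h1 : Tendsto (fun _ : ℕ => t) atTop (𝓝 0) := by
          have := hiter t ht.le
          simpa [hiterfix] using this
        exact tendsto_nhds_unique tendsto_const_nhds h1
      linarith
  -- antitone orbit distances
  have hanti : ∀ x y : X, Antitone (fun n => p (T^[n] x) (T^[n] y)) := by
    intro x y
    apply antitone_nat_of_succ_le
    intro n
    have h1 : p (T^[n + 1] x) (T^[n + 1] y) ≤
        max (φ (p (T^[n] x) (T^[n] y)))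
          ((p (T^[n] x) (T^[n] x) + p (T^[n] y) (T^[n] y)) / 2) := by
      rw [Function.iterate_succ_apply', Function.iterate_succ_apply']
      exact hT _ _
    refine h1.trans (max_le ?_ ?_)
    · exact hφ_le _ (hp.nonneg _ _)
    · have h2 := hp.self_le (T^[n] x) (T^[n] y)
      have h3 := hp.self_le (T^[n] y) (T^[n] x)
      rw [hp.symm (T^[n] y) (T^[n] x)] at h3
      linarith
  have hbdd : ∀ x y : X, BddBelow (Set.range fun n => p (T^[n] x) (T^[n] y)) := by
    intro x y
    exact ⟨ρ, by rintro r ⟨n, rfl⟩; exact hρ_le _ _⟩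
  have hlim : ∀ x y : X, Tendsto (fun n => p (T^[n] x) (T^[n] y)) atTop
      (𝓝 (⨅ n, p (T^[n] x) (T^[n] y))) :=
    fun x y => tendsto_atTop_ciInf (hanti x y) (hbdd x y)
  -- the main pair lemma: self-distance limits agree with pair limits
  have hmain : ∀ x y : X,
      (⨅ n, p (T^[n] x) (T^[n] x)) = (⨅ n, p (T^[n] x) (T^[n] y)) ∧
      (⨅ n, p (T^[n] y) (T^[n] y)) = (⨅ n, p (T^[n] x) (T^[n] y)) := by
    intro x y
    have hρU : ρ ≤ ⨅ n, p (T^[n] x) (T^[n] y) := le_ciInf fun n => hρ_le _ _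
    have hU0 : 0 ≤ ⨅ n, p (T^[n] x) (T^[n] y) := hρ_nonneg.trans hρU
    have hAU : (⨅ n, p (T^[n] x) (T^[n] x)) ≤ ⨅ n, p (T^[n] x) (T^[n] y) :=
      ciInf_mono (hbdd x x) fun n => hp.self_le _ _
    have hBU : (⨅ n, p (T^[n] y) (T^[n] y)) ≤ ⨅ n, p (T^[n] x) (T^[n] y) :=
      ciInf_mono (hbdd y y) fun n =>
        le_of_le_of_eq (hp.self_le (T^[n] y) (T^[n] x)) (hp.symm _ _)
    have hρA : ρ ≤ ⨅ n, p (T^[n] x) (T^[n] x) := le_ciInf fun n => hρ_le _ _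
    have hρB : ρ ≤ ⨅ n, p (T^[n] y) (T^[n] y) := le_ciInf fun n => hρ_le _ _
    have hUle : ∀ n, (⨅ n, p (T^[n] x) (T^[n] y)) ≤ p (T^[n] x) (T^[n] y) :=
      fun n => ciInf_le (hbdd x y) n
    have hkey : (⨅ n, p (T^[n] x) (T^[n] y)) ≤
        max (φ (⨅ n, p (T^[n] x) (T^[n] y)))
          (((⨅ n, p (T^[n] x) (T^[n] x)) + ⨅ n, p (T^[n] y) (T^[n] y)) / 2) := by
      have hseq : ∀ n, p (T^[n + 1] x) (T^[n + 1] y) ≤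
          max (p (T^[n] x) (T^[n] y) - (⨅ n, p (T^[n] x) (T^[n] y)) +
              φ (⨅ n, p (T^[n] x) (T^[n] y)))
            ((p (T^[n] x) (T^[n] x) + p (T^[n] y) (T^[n] y)) / 2) := by
        intro n
        have h1 : p (T^[n + 1] x) (T^[n + 1] y) ≤
            max (φ (p (T^[n] x) (T^[n] y)))
              ((p (T^[n] x) (T^[n] x) + p (T^[n] y) (T^[n] y)) / 2) := by
          rw [Function.iterate_succ_apply', Function.iterate_succ_apply']
          exact hT _ _
        refine h1.trans (max_le_max ?_ le_rfl)
        have := hf_mono _ _ hU0 (hUle n)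
        linarith
      have t1 : Tendsto (fun n => p (T^[n + 1] x) (T^[n + 1] y)) atTop
          (𝓝 (⨅ n, p (T^[n] x) (T^[n] y))) := (hlim x y).comp (tendsto_add_atTop_nat 1)
      have t2 : Tendsto (fun n =>
          max (p (T^[n] x) (T^[n] y) - (⨅ n, p (T^[n] x) (T^[n] y)) +
              φ (⨅ n, p (T^[n] x) (T^[n] y)))
            ((p (T^[n] x) (T^[n] x) + p (T^[n] y) (T^[n] y)) / 2)) atTop
          (𝓝 (max ((⨅ n, p (T^[n] x) (T^[n] y)) - (⨅ n, p (T^[n] x) (T^[n] y)) +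
              φ (⨅ n, p (T^[n] x) (T^[n] y)))
            (((⨅ n, p (T^[n] x) (T^[n] x)) + ⨅ n, p (T^[n] y) (T^[n] y)) / 2))) :=
        ((((hlim x y).sub_const _).add_const _).max (((hlim x x).add (hlim y y)).div_const 2))
      have h := le_of_tendsto_of_tendsto' t1 t2 hseq
      simpa using h
    rcases le_max_iff.1 hkey with h | h
    · have hU0' : (⨅ n, p (T^[n] x) (T^[n] y)) = 0 := by
        by_contra hne
        have hUpos : 0 < ⨅ n, p (T^[n] x) (T^[n] y) := lt_of_le_of_ne hU0 (Ne.symm hne)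
        exact absurd h (not_le.2 (hφ_lt _ hUpos))
      constructor <;> linarith
    · constructor <;> linarith
  -- all the limits equal ρ
  have hxx_le : ∀ x : X, (⨅ n, p (T^[n] x) (T^[n] x)) ≤ ρ := by
    intro x
    refine le_csInf hSne ?_
    rintro r ⟨a, b, rfl⟩
    have e1 : (⨅ n, p (T^[n] x) (T^[n] x)) = ⨅ n, p (T^[n] a) (T^[n] a) :=
      (hmain x a).1.trans (hmain x a).2.symm
    have e2 := (hmain a b).1
    have e3 : (⨅ n, p (T^[n] a) (T^[n] b)) ≤ p a b := by
      have := ciInf_le (hbdd a b) 0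
      simpa using this
    calc (⨅ n, p (T^[n] x) (T^[n] x)) = ⨅ n, p (T^[n] a) (T^[n] b) := e1.trans e2
      _ ≤ p a b := e3
  have hLρ : ∀ x y : X, (⨅ n, p (T^[n] x) (T^[n] y)) = ρ := by
    intro x y
    have hLxx : (⨅ n, p (T^[n] x) (T^[n] x)) = ρ :=
      le_antisymm (hxx_le x) (le_ciInf fun n => hρ_le _ _)
    exact (hmain x y).1.symm.trans hLxx
  have key : ∀ x y : X, Tendsto (fun n => p (T^[n] x) (T^[n] y)) atTop (𝓝 ρ) := by
    intro x y
    have := hlim x y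
    rwa [hLρ x y] at this
  -- Cauchy estimate
  have hcauchy : ∀ ε : ℝ, 0 < ε → ∃ N : ℕ, ∀ n m : ℕ, N ≤ n → N ≤ m →
      p (T^[n] x₀) (T^[m] x₀) ≤ ρ + ε := by
    intro ε hε
    set η := ε / 2 with hηdef
    have hη2 : 0 < η := by positivity
    have hfpos : 0 < (ρ + η) - φ (ρ + η) := by
      have := hφ_lt (ρ + η) (by linarith)
      linarith
    set δ := min (η / 2) ((ρ + η) - φ (ρ + η)) with hδdef
    have hδpos : 0 < δ := lt_min (by linarith) hfpos
    have hδ1 : δ ≤ (ρ + η) - φ (ρ + η) := min_le_right _ _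
    have hδ2 : δ ≤ η / 2 := min_le_left _ _
    have hcev : ∀ᶠ n in atTop, p (T^[n] x₀) (T^[n] x₀) ≤ ρ + δ :=
      (key x₀ x₀).eventually (eventually_le_nhds (by linarith))
    have hdlim : Tendsto (fun n => p (T^[n] x₀) (T^[n + 1] x₀)) atTop (𝓝 ρ) := by
      have := key x₀ (T x₀)
      have heq : (fun n => p (T^[n] x₀) (T^[n] (T x₀))) =
          fun n => p (T^[n] x₀) (T^[n + 1] x₀) := by
        funext n
        rw [← Function.iterate_succ_apply]
      rwa [heq] at this
    have hdev : ∀ᶠ n in atTop, p (T^[n] x₀) (T^[n + 1] x₀) ≤ ρ + δ :=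
      hdlim.eventually (eventually_le_nhds (by linarith))
    obtain ⟨N, hN⟩ := eventually_atTop.1 (hcev.and hdev)
    have inner : ∀ m : ℕ, N ≤ m → p (T^[N] x₀) (T^[m] x₀) ≤ ρ + η := by
      intro m hm
      induction m, hm using Nat.le_induction with
      | base =>
        have := (hN N le_rfl).1
        linarith
      | succ m hm ih =>
        have tri := hp.triangle (T^[N] x₀) (T^[N + 1] x₀) (T^[m + 1] x₀)
        have hd : p (T^[N] x₀) (T^[N + 1] x₀) ≤ ρ + δ := (hN N le_rfl).2
        have hc1 : ρ ≤ p (T^[N + 1] x₀) (T^[N + 1] x₀) := hρ_le _ _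
        have hstep : p (T^[N + 1] x₀) (T^[m + 1] x₀) ≤
            max (φ (p (T^[N] x₀) (T^[m] x₀)))
              ((p (T^[N] x₀) (T^[N] x₀) + p (T^[m] x₀) (T^[m] x₀)) / 2) := by
          rw [Function.iterate_succ_apply', Function.iterate_succ_apply']
          exact hT _ _
        have h1 : φ (p (T^[N] x₀) (T^[m] x₀)) ≤ φ (ρ + η) :=
          hφ_mono _ _ (hp.nonneg _ _) ih
        have h2 : (p (T^[N] x₀) (T^[N] x₀) + p (T^[m] x₀) (T^[m] x₀)) / 2 ≤ ρ + δ := by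
          have hcN := (hN N le_rfl).1
          have hcm := (hN m hm).1
          linarith
        have h3 : p (T^[N + 1] x₀) (T^[m + 1] x₀) ≤ max (φ (ρ + η)) (ρ + δ) :=
          hstep.trans (max_le_max h1 h2)
        rcases le_max_iff.1 h3 with h | h
        · linarith
        · linarith
    refine ⟨N, fun n m hn hm => ?_⟩
    have tri := hp.triangle (T^[n] x₀) (T^[N] x₀) (T^[m] x₀)
    have h1 : p (T^[n] x₀) (T^[N] x₀) ≤ ρ + η := by
      rw [hp.symm]
      exact inner n hn
    have h2 := inner m hm
    have h3 := hρ_le (T^[N] x₀) (T^[N] x₀)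
    have : ε = 2 * η := by rw [hηdef]; ring
    linarith
  have hdouble : Tendsto (fun nm : ℕ × ℕ => p (T^[nm.1] x₀) (T^[nm.2] x₀)) atTop (𝓝 ρ) := by
    rw [Metric.tendsto_nhds]
    intro ε hε
    obtain ⟨N, hN⟩ := hcauchy (ε / 2) (by linarith)
    rw [eventually_atTop]
    refine ⟨(N, N), fun nm hnm => ?_⟩
    have h1 := hN nm.1 nm.2 hnm.1 hnm.2
    have h2 := hρ_le (T^[nm.1] x₀) (T^[nm.2] x₀)
    rw [Real.dist_eq, abs_lt]
    constructor <;> linarith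
  obtain ⟨z, hz1, hz2⟩ := hcomp (fun n => T^[n] x₀) ⟨ρ, hdouble⟩
  have hzz : p z z = ρ := tendsto_nhds_unique hz2 hdouble
  have hpz : Tendsto (fun n => p z (T^[n] x₀)) atTop (𝓝 ρ) := by
    have h1 : (fun n => p z (T^[n] x₀)) =
        fun n => (pS p z (T^[n] x₀) + p z z + p (T^[n] x₀) (T^[n] x₀)) / 2 := by
      funext n
      simp only [pS]
      ring
    rw [h1]
    have h2 := ((hz1.add (tendsto_const_nhds : Tendsto (fun _ : ℕ => p z z) atTop
      (𝓝 (p z z)))).add (key x₀ x₀)).div_const 2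
    have h3 : (0 + p z z + ρ) / 2 = ρ := by rw [hzz]; ring
    rwa [h3] at h2
  have hTz : T z = z := by
    have hbound : ∀ n : ℕ, p (T z) z ≤
        max (p z (T^[n] x₀)) ((p z z + p (T^[n] x₀) (T^[n] x₀)) / 2) +
          p z (T^[n + 1] x₀) - p (T^[n + 1] x₀) (T^[n + 1] x₀) := by
      intro n
      have tri := hp.triangle (T z) (T^[n + 1] x₀) z
      have hstep : p (T z) (T^[n + 1] x₀) ≤
          max (φ (p z (T^[n] x₀))) ((p z z + p (T^[n] x₀) (T^[n] x₀)) / 2) := by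
        rw [Function.iterate_succ_apply']
        exact hT z (T^[n] x₀)
      have hφb : φ (p z (T^[n] x₀)) ≤ p z (T^[n] x₀) := hφ_le _ (hp.nonneg _ _)
      have hmax := hstep.trans (max_le_max hφb le_rfl)
      have hsymm : p (T^[n + 1] x₀) z = p z (T^[n + 1] x₀) := hp.symm _ _
      linarith
    have t1 : Tendsto (fun n =>
        max (p z (T^[n] x₀)) ((p z z + p (T^[n] x₀) (T^[n] x₀)) / 2) +
          p z (T^[n + 1] x₀) - p (T^[n + 1] x₀) (T^[n + 1] x₀)) atTop
        (𝓝 (max ρ ((p z z + ρ) / 2) + ρ - ρ)) :=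
      ((hpz.max (((tendsto_const_nhds : Tendsto (fun _ : ℕ => p z z) atTop
        (𝓝 (p z z))).add (key x₀ x₀)).div_const 2)).add
        (hpz.comp (tendsto_add_atTop_nat 1))).sub ((key x₀ x₀).comp (tendsto_add_atTop_nat 1))
    have heq : max ρ ((p z z + ρ) / 2) + ρ - ρ = ρ := by
      rw [hzz]
      have : (ρ + ρ) / 2 = ρ := by ring
      rw [this, max_self]
      ring
    rw [heq] at t1
    have hle : p (T z) z ≤ ρ := ge_of_tendsto t1 (Eventually.of_forall hbound)
    have h1 : p (T z) z = ρ := le_antisymm hle (hρ_le _ _)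
    have h2 : p (T z) (T z) = ρ := le_antisymm ((hp.self_le _ _).trans h1.le) (hρ_le _ _)
    have h3 : p z (T z) = ρ := (hp.symm z (T z)).trans h1
    exact (hp.eq_of z (T z) (hzz.trans h3.symm) (h2.trans h3.symm)).symm
  refine ⟨z, hTz, ?_, hzz, ?_⟩
  · intro w hw
    have hwfix : ∀ n : ℕ, T^[n] w = w := fun n => Function.iterate_fixed hw n
    have hzfix : ∀ n : ℕ, T^[n] z = z := fun n => Function.iterate_fixed hTz n
    have h1' : p w z = ρ := by
      have h1 := key w z
      have heq : (fun n => p (T^[n] w) (T^[n] z)) = fun _ => p w z := by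
        funext n; rw [hwfix, hzfix]
      rw [heq] at h1
      exact tendsto_nhds_unique tendsto_const_nhds h1
    have h2 : p w w = ρ := by
      have h1 := key w w
      have heq : (fun n => p (T^[n] w) (T^[n] w)) = fun _ => p w w := by
        funext n; rw [hwfix]
      rw [heq] at h1
      exact tendsto_nhds_unique tendsto_const_nhds h1
    exact hp.eq_of w z (h2.trans h1'.symm) (hzz.trans h1'.symm)
  · intro x hx
    have hzfix : ∀ n : ℕ, T^[n] z = z := fun n => Function.iterate_fixed hTz n
    have h1 : Tendsto (fun n => p (T^[n] x) z) atTop (𝓝 ρ) := by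
      have := key x z
      simpa only [hzfix] using this
    have h2 := key x x
    have h3 := ((h1.const_mul 2).sub h2).sub (tendsto_const_nhds :
      Tendsto (fun _ : ℕ => p z z) atTop (𝓝 (p z z)))
    have heq : 2 * ρ - ρ - p z z = 0 := by rw [hzz]; ring
    rw [heq] at h3
    exact h3
end

section
/- Let X = ℚ ∩ [0,∞) with partial metric p(x,y) = max{x,y}. Then (X,p) is a 0-complete partial metric space that is not complete. -/
open Filter Topology

/-- 0-completeness: every 0-Cauchy sequence (lim_{n,m} p(x_n,x_m) = 0) converges
wrt pˢ to a point z with p(z,z) = 0. -/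
def IsZeroCompletePMS {X : Type*} (p : X → X → ℝ) : Prop :=
  ∀ x : ℕ → X, Tendsto (fun nm : ℕ × ℕ => p (x nm.1) (x nm.2)) atTop (𝓝 0) →
    ∃ z : X, p z z = 0 ∧ Tendsto (fun n => pS p z (x n)) atTop (𝓝 0)

/-!
The partial metric is `p x y = max (f x) (f y)` for the inclusion `f` of the nonnegative rationals
into `ℝ`. Since `p x x = f x`, a 0-Cauchy sequence has `f xₙ → 0` and converges to `0`. Conversely,
if `f xₙ → a` then `p xₙ xₘ → a`, so completeness would give a point `z` with `f z = p z z = a`: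
the range of `f` would be closed. Rationals slightly above `√2` show that it is not.
-/

open Set

section MaxPartialMetric

variable {X : Type*} (f : X → ℝ)

lemma isPartialMetric_max (hf : Function.Injective f) (hf₀ : ∀ x, 0 ≤ f x) :
    IsPartialMetric fun x y => max (f x) (f y) where
  nonneg x _ := (hf₀ x).trans (le_max_left _ _)
  symm _ _ := max_comm _ _
  eq_of x y hx hy := by simp only [max_self] at hx hy; exact hf (hx.trans hy.symm)
  self_le x y := by simp only [max_self, le_max_left]
  triangle x y z := by
    simp only [max_self]
    rcases le_total (f x) (f z) with h | h
    · linarith [max_eq_right h, le_max_right (f x) (f y), le_max_right (f y) (f z)]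
    · linarith [max_eq_left h, le_max_left (f x) (f y), le_max_left (f y) (f z)]

lemma isZeroCompletePMS_max (hf₀ : ∀ x, 0 ≤ f x) {z : X} (hz : f z = 0) :
    IsZeroCompletePMS fun x y => max (f x) (f y) := by
  intro x hx
  refine ⟨z, by simp [hz], ?_⟩
  have hpS : ∀ n, pS (fun x y => max (f x) (f y)) z (x n) = f (x n) := fun n => by
    simp only [pS, hz, max_self, max_eq_right (hf₀ (x n))]
    ring
  simpa only [hpS, Function.comp_def, max_self] using hx.comp tendsto_atTop_diagonal

lemma isClosed_range_of_isCompletePMS_max (h : IsCompletePMS fun x y => max (f x) (f y)) :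
    IsClosed (range f) := by
  refine isClosed_of_closure_subset fun a ha => ?_
  obtain ⟨u, hu, hua⟩ := mem_closure_iff_seq_limit.1 ha
  choose x hx using hu
  have hfx : Tendsto (fun n => f (x n)) atTop (𝓝 a) := by simpa only [hx] using hua
  have hpx : Tendsto (fun nm : ℕ × ℕ => max (f (x nm.1)) (f (x nm.2))) atTop (𝓝 a) := by
    rw [← prod_atTop_atTop_eq, ← max_self a]
    exact (hfx.comp tendsto_fst).max (hfx.comp tendsto_snd)
  obtain ⟨z, -, hz⟩ := h x ⟨a, hpx⟩
  exact ⟨z, by simpa only [max_self] using tendsto_nhds_unique hz hpx⟩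

end MaxPartialMetric

lemma not_isClosed_range_nonneg_rat_cast :
    ¬ IsClosed (range fun q : {q : ℚ // 0 ≤ q} => (q.1 : ℝ)) := by
  intro h
  have hsqrt : √2 ∈ closure (range fun q : {q : ℚ // 0 ≤ q} => (q.1 : ℝ)) := by
    refine Metric.mem_closure_iff.2 fun ε hε => ?_
    obtain ⟨q, hq₁, hq₂⟩ := exists_rat_btwn (lt_add_of_pos_right √2 hε)
    have hq₀ : (0 : ℝ) ≤ q := (Real.sqrt_nonneg 2).trans hq₁.le
    refine ⟨q, ⟨⟨q, by exact_mod_cast hq₀⟩, rfl⟩, ?_⟩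
    rw [Real.dist_eq, abs_sub_comm, abs_of_pos (sub_pos.2 hq₁)]
    linarith
  obtain ⟨q, hq⟩ := h.closure_eq ▸ hsqrt
  exact irrational_sqrt_two ⟨q.1, hq⟩

theorem rat_max_zero_complete_not_complete :
    let X := {q : ℚ // 0 ≤ q}
    let p : X → X → ℝ := fun x y => (max x.1 y.1 : ℚ)
    IsPartialMetric p ∧ IsZeroCompletePMS p ∧ ¬ IsCompletePMS p := by
  intro X p
  have hp : p = fun x y => max (x.1 : ℝ) (y.1 : ℝ) := by
    funext x y
    exact Rat.cast_max x.1 y.1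
  rw [hp]
  have hinj : Function.Injective fun x : X => (x.1 : ℝ) :=
    fun _ _ hxy => Subtype.ext (Rat.cast_injective hxy)
  have hnonneg : ∀ x : X, (0 : ℝ) ≤ x.1 := fun x => by exact_mod_cast x.2
  exact ⟨isPartialMetric_max _ hinj hnonneg,
    isZeroCompletePMS_max _ hnonneg (z := ⟨0, le_rfl⟩) Rat.cast_zero,
    fun h => not_isClosed_range_nonneg_rat_cast (isClosed_range_of_isCompletePMS_max _ h)⟩
end
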